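/- arXiv:2102.01920 — 7 statements merged into one kernel-verified Lean document; each statement's English description precedes it below -/
import Mathlib

section
/- Let g be a real Lie algebra with a complex structure J (an endomorphism with J² = -Id satisfying the integrability condition J[x,y] - [Jx,y] - [x,Jy] - J[Jx,Jy] = 0). If J is abelian, i.e. [Jx,Jy] = [x,y] for all x,y, then the commutator ideal [g,g] is abelian; in particular g is 2-step solvable. -/
/-!
Extend `J` complex-linearly to `ℂ ⊗[ℝ] L`. There it still satisfies `J² = -1` and
`⁅J z, J w⁆ = ⁅z, w⁆`, so `ℂ ⊗[ℝ] L` is the sum of the `±i`-eigenspaces of `J`, and on each of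
them `⁅z, w⁆ = ⁅J z, J w⁆ = -⁅z, w⁆`, i.e. both are abelian. A Lie ring that is the sum of two
abelian subsets has commuting commutators (an Itô-type argument), and this descends to `L`
because `x ↦ 1 ⊗ₜ x` is an injective bracket-preserving map.
-/

open Pointwise Complex Module

def IsMetabelian (K : Type*) [LieRing K] : Prop :=
  ∀ a b c d : K, ⁅⁅a, b⁆, ⁅c, d⁆⁆ = 0

section SumOfAbelianSets

variable {K : Type*} [LieRing K] {A B : Set K}

theorem lie_lie_eq_zero_of_mem_of_add_eq_univ (hA : ∀ a ∈ A, ∀ a' ∈ A, ⁅a, a'⁆ = 0)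
    (hB : ∀ b ∈ B, ∀ b' ∈ B, ⁅b, b'⁆ = 0) (hAB : A + B = Set.univ)
    {a a' b b' : K} (ha : a ∈ A) (ha' : a' ∈ A) (hb : b ∈ B) (hb' : b' ∈ B) :
    ⁅⁅a, b⁆, ⁅a', b'⁆⁆ = 0 := by
  -- Both terms of the Leibniz expansion of the left side reduce to `±⁅α, β'⁆`.
  obtain ⟨α, hα, β, hβ, hαβ : α + β = ⁅a, b'⁆⟩ := hAB.symm ▸ Set.mem_univ ⁅a, b'⁆
  obtain ⟨α', hα', β', hβ', hαβ' : α' + β' = ⁅b, a'⁆⟩ := hAB.symm ▸ Set.mem_univ ⁅b, a'⁆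
  have h₁ : ⁅⁅a, b⁆, a'⁆ = ⁅a, β'⁆ := by
    rw [lie_lie, ← hαβ', lie_add, hA a ha α' hα', hA a ha a' ha', lie_zero, zero_add, sub_zero]
  have h₂ : ⁅⁅a, b⁆, b'⁆ = ⁅α, b⁆ := by
    rw [lie_lie, hB b hb b' hb', lie_zero, zero_sub, ← hαβ, lie_add, hB b hb β hβ, add_zero,
      ← lie_skew, neg_neg]
  have h₃ : ⁅⁅a, β'⁆, b'⁆ = ⁅α, β'⁆ := by
    rw [lie_lie, hB β' hβ' b' hb', lie_zero, zero_sub, ← hαβ, lie_add, hB β' hβ' β hβ, add_zero,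
      ← lie_skew, neg_neg]
  have h₄ : ⁅a', ⁅α, b⁆⁆ = -⁅α, β'⁆ := by
    rw [leibniz_lie, hA a' ha' α hα, zero_lie, zero_add, ← lie_skew a' b, ← hαβ', lie_neg,
      lie_add, hA α hα α' hα', zero_add]
  rw [leibniz_lie, h₁, h₂, h₃, h₄, add_neg_cancel]

theorem exists_lie_eq_sub_of_add_eq_univ (hA : ∀ a ∈ A, ∀ a' ∈ A, ⁅a, a'⁆ = 0)
    (hB : ∀ b ∈ B, ∀ b' ∈ B, ⁅b, b'⁆ = 0) (hAB : A + B = Set.univ) (x y : K) :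
    ∃ a ∈ A, ∃ a' ∈ A, ∃ b ∈ B, ∃ b' ∈ B, ⁅x, y⁆ = ⁅a, b⁆ - ⁅a', b'⁆ := by
  obtain ⟨a, ha, b, hb, rfl⟩ := hAB.symm ▸ Set.mem_univ x
  obtain ⟨a', ha', b', hb', rfl⟩ := hAB.symm ▸ Set.mem_univ y
  refine ⟨a, ha, a', ha', b', hb', b, hb, ?_⟩
  rw [add_lie, lie_add, lie_add, hA a ha a' ha', hB b hb b' hb', ← lie_skew b a']
  abel

theorem isMetabelian_of_add_eq_univ (hA : ∀ a ∈ A, ∀ a' ∈ A, ⁅a, a'⁆ = 0)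
    (hB : ∀ b ∈ B, ∀ b' ∈ B, ⁅b, b'⁆ = 0) (hAB : A + B = Set.univ) : IsMetabelian K := by
  intro x y z w
  obtain ⟨a₁, ha₁, a₂, ha₂, b₁, hb₁, b₂, hb₂, hxy⟩ := exists_lie_eq_sub_of_add_eq_univ hA hB hAB x y
  obtain ⟨a₃, ha₃, a₄, ha₄, b₃, hb₃, b₄, hb₄, hzw⟩ := exists_lie_eq_sub_of_add_eq_univ hA hB hAB z w
  have key := @lie_lie_eq_zero_of_mem_of_add_eq_univ _ _ _ _ hA hB hAB
  rw [hxy, hzw, sub_lie, lie_sub, lie_sub, key ha₁ ha₃ hb₁ hb₃, key ha₁ ha₄ hb₁ hb₄,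
    key ha₂ ha₃ hb₂ hb₃, key ha₂ ha₄ hb₂ hb₄, sub_self]

end SumOfAbelianSets

theorem IsMetabelian.derivedSeries_two_eq_bot {R K : Type*} [CommRing R] [LieRing K]
    [LieAlgebra R K] (h : IsMetabelian K) : LieAlgebra.derivedSeries R K 2 = ⊥ := by
  rw [LieAlgebra.derivedSeries_def, LieAlgebra.derivedSeriesOfIdeal_succ,
    LieSubmodule.lie_eq_bot_iff]
  intro x hx y hy
  rw [← LieSubmodule.mem_toSubmodule, LieAlgebra.derivedSeriesOfIdeal_succ,
    LieAlgebra.derivedSeriesOfIdeal_zero, LieSubmodule.lieIdeal_oper_eq_linear_span'] at hx hy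
  induction hx, hy using Submodule.span_induction₂ with
  | mem_mem x y hx hy =>
    obtain ⟨a, -, b, -, rfl⟩ := hx
    obtain ⟨c, -, d, -, rfl⟩ := hy
    exact h a b c d
  | zero_left => exact zero_lie _
  | zero_right => exact lie_zero _
  | add_left x y z _ _ _ hx hy => rw [add_lie, hx, hy, add_zero]
  | add_right x y z _ _ _ hy hz => rw [lie_add, hy, hz, add_zero]
  | smul_left r x y _ _ h => rw [smul_lie, h, smul_zero]
  | smul_right r x y _ _ h => rw [lie_smul, h, smul_zero]

section Eigenspaces

variable {𝕜 K : Type*} [Field 𝕜] [LieRing K] [LieAlgebra 𝕜 K] {T : Module.End 𝕜 K}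

theorem lie_eq_zero_of_mem_eigenspace (hT : ∀ x y, ⁅T x, T y⁆ = ⁅x, y⁆) {μ : 𝕜}
    (hμ : μ * μ ≠ 1) {x y : K} (hx : x ∈ T.eigenspace μ) (hy : y ∈ T.eigenspace μ) :
    ⁅x, y⁆ = 0 := by
  rw [End.mem_eigenspace_iff] at hx hy
  have : (μ * μ - 1) • ⁅x, y⁆ = 0 := by
    rw [sub_smul, one_smul, mul_smul, ← smul_lie, ← lie_smul, ← hx, ← hy, hT, sub_self]
  exact (smul_eq_zero.mp this).resolve_left (sub_ne_zero.mpr hμ)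

end Eigenspaces

section ComplexStructure

variable {K : Type*} [LieRing K] [LieAlgebra ℂ K] {T : Module.End ℂ K}

theorem eigenspace_I_add_eigenspace_neg_I (hT2 : ∀ x, T (T x) = -x) :
    (T.eigenspace I : Set K) + (T.eigenspace (-I) : Set K) = Set.univ := by
  refine Set.eq_univ_of_forall fun x =>
    ⟨(2⁻¹ : ℂ) • (x - I • T x), ?_, (2⁻¹ : ℂ) • (x + I • T x), ?_, by module⟩ <;>
  · rw [SetLike.mem_coe, End.mem_eigenspace_iff]
    simp only [map_smul, map_sub, map_add, hT2]
    match_scalars <;> grind [I_sq]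

theorem isMetabelian_of_abelianComplexStructure_complexLinear (hT2 : ∀ x, T (T x) = -x)
    (hT : ∀ x y, ⁅T x, T y⁆ = ⁅x, y⁆) : IsMetabelian K :=
  isMetabelian_of_add_eq_univ
    (fun _ hx _ hy => lie_eq_zero_of_mem_eigenspace hT (by norm_num) hx hy)
    (fun _ hx _ hy => lie_eq_zero_of_mem_eigenspace hT (by norm_num) hx hy)
    (eigenspace_I_add_eigenspace_neg_I hT2)

end ComplexStructure

section BaseChange

open TensorProduct

variable {R A L : Type*} [CommRing R] [CommRing A] [Algebra R A] [LieRing L] [LieAlgebra R L]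
  {J : L →ₗ[R] L}

theorem baseChange_baseChange_apply (hJ2 : ∀ x, J (J x) = -x) (z : A ⊗[R] L) :
    J.baseChange A (J.baseChange A z) = -z := by
  induction z using TensorProduct.induction_on with
  | zero => simp only [map_zero, neg_zero]
  | tmul c x => rw [LinearMap.baseChange_tmul, LinearMap.baseChange_tmul, hJ2, tmul_neg]
  | add z w hz hw => rw [map_add, map_add, hz, hw, neg_add]

theorem lie_baseChange_baseChange (hab : ∀ x y, ⁅J x, J y⁆ = ⁅x, y⁆) (z w : A ⊗[R] L) :
    ⁅J.baseChange A z, J.baseChange A w⁆ = ⁅z, w⁆ := by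
  induction z using TensorProduct.induction_on with
  | zero => simp only [map_zero, zero_lie]
  | add z z' hz hz' => rw [map_add, add_lie, add_lie, hz, hz']
  | tmul c x =>
    induction w using TensorProduct.induction_on with
    | zero => simp only [map_zero, lie_zero]
    | add w w' hw hw' => rw [map_add, lie_add, lie_add, hw, hw']
    | tmul d y =>
      rw [LinearMap.baseChange_tmul, LinearMap.baseChange_tmul,
        LieAlgebra.ExtendScalars.bracket_tmul, LieAlgebra.ExtendScalars.bracket_tmul, hab]

theorem one_tmul_lie (x y : L) :
    (1 : A) ⊗ₜ[R] ⁅x, y⁆ = ⁅(1 : A) ⊗ₜ[R] x, (1 : A) ⊗ₜ[R] y⁆ := by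
  rw [LieAlgebra.ExtendScalars.bracket_tmul, one_mul]

end BaseChange

open TensorProduct in
theorem isMetabelian_of_abelianComplexStructure {L : Type*} [LieRing L] [LieAlgebra ℝ L]
    {J : L →ₗ[ℝ] L} (hJ2 : ∀ x, J (J x) = -x)
    (hab : ∀ x y, ⁅J x, J y⁆ = ⁅x, y⁆) : IsMetabelian L := by
  intro a b c d
  apply Module.FaithfullyFlat.tensorProduct_mk_injective (A := ℝ) (B := ℂ) L
  rw [mk_apply, mk_apply, one_tmul_lie, one_tmul_lie, one_tmul_lie, tmul_zero]
  exact isMetabelian_of_abelianComplexStructure_complexLinear (baseChange_baseChange_apply hJ2)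
    (lie_baseChange_baseChange hab) _ _ _ _

theorem abelian_complex_structure_commutator_abelian_general
    {L : Type*} [LieRing L] [LieAlgebra ℝ L]
    (J : L →ₗ[ℝ] L)
    (hJ2 : ∀ x : L, J (J x) = -x)
    (hab : ∀ x y : L, ⁅J x, J y⁆ = ⁅x, y⁆) :
    (∀ a b c d : L, ⁅⁅a, b⁆, ⁅c, d⁆⁆ = 0) ∧
      LieAlgebra.derivedSeries ℝ L 2 = ⊥ := by
  have h : IsMetabelian L := isMetabelian_of_abelianComplexStructure hJ2 hab
  exact ⟨h, h.derivedSeries_two_eq_bot⟩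

/-- An abelian complex structure on a real Lie algebra forces the
commutator ideal to be abelian; in particular the Lie algebra is 2-step solvable. -/
theorem abelian_complex_structure_commutator_abelian
    {L : Type*} [LieRing L] [LieAlgebra ℝ L]
    (J : L →ₗ[ℝ] L)
    (hJ2 : ∀ x : L, J (J x) = -x)
    (hint : ∀ x y : L, J ⁅x, y⁆ - ⁅J x, y⁆ - ⁅x, J y⁆ - J ⁅J x, J y⁆ = 0)
    (hab : ∀ x y : L, ⁅J x, J y⁆ = ⁅x, y⁆) :
    (∀ a b c d : L, ⁅⁅a, b⁆, ⁅c, d⁆⁆ = 0) ∧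
      LieAlgebra.derivedSeries ℝ L 2 = ⊥ :=
  abelian_complex_structure_commutator_abelian_general J hJ2 hab
end

section
/- Let g be a real Lie algebra with an abelian complex structure J and a J-invariant inner product g(·,·). Define T^B(x,y,z) = -g([x,y],z) - g([y,z],x) - g([z,x],y) and dT^B(w,x,y,z) = -T^B([w,x],y,z) + T^B([w,y],x,z) - T^B([w,z],x,y) - T^B([x,y],w,z) + T^B([x,z],w,y) - T^B([y,z],w,x). Then dT^B(w,x,y,z) = 2( g([y,z],[w,x]) - g([x,z],[w,y]) + g([x,y],[w,z]) ) for all w,x,y,z ∈ g. -/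
/-! Expanding `T^B([a,b],c,d)` and using skew-symmetry gives
`-g([[a,b],c],d) + g([[a,b],d],c) - g([c,d],[a,b])`. In `dT^B` the twelve double-bracket
terms fall into four Jacobi identities, one for each of `w, x, y, z` in the last slot, so
they cancel, and the six remaining terms pair up by symmetry of `g`. -/

theorem lie_lie_sub_lie_lie_add_lie_lie {L : Type*} [LieRing L] (a b c : L) :
    ⁅⁅a, b⁆, c⁆ - ⁅⁅a, c⁆, b⁆ + ⁅⁅b, c⁆, a⁆ = 0 := by
  rw [← lie_skew ⁅a, c⁆ b, ← lie_skew ⁅b, c⁆ a, lie_lie]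
  abel

theorem LinearMap.map_lie_lie_sub_map_lie_lie_add_map_lie_lie {R L M N : Type*} [CommRing R]
    [LieRing L] [LieAlgebra R L] [AddCommGroup M] [Module R M] [AddCommGroup N] [Module R N]
    (B : L →ₗ[R] M →ₗ[R] N) (a b c : L) (d : M) :
    B ⁅⁅a, b⁆, c⁆ d - B ⁅⁅a, c⁆, b⁆ d + B ⁅⁅b, c⁆, a⁆ d = 0 := by
  rw [← LinearMap.sub_apply, ← LinearMap.add_apply, ← map_sub, ← map_add,
    lie_lie_sub_lie_lie_add_lie_lie, map_zero, LinearMap.zero_apply]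

theorem dT_bismut_formula_general
    {L : Type*} [LieRing L] [LieAlgebra ℝ L]
    (g : L →ₗ[ℝ] L →ₗ[ℝ] ℝ)
    (hsymm : ∀ x y : L, g x y = g y x)
    (T : L → L → L → ℝ)
    (hT : ∀ x y z : L, T x y z = -g ⁅x, y⁆ z - g ⁅y, z⁆ x - g ⁅z, x⁆ y)
    (dT : L → L → L → L → ℝ)
    (hdT : ∀ w x y z : L, dT w x y z =
      -T ⁅w, x⁆ y z + T ⁅w, y⁆ x z - T ⁅w, z⁆ x y
      - T ⁅x, y⁆ w z + T ⁅x, z⁆ w y - T ⁅y, z⁆ w x) :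
    ∀ w x y z : L, dT w x y z =
      2 * (g ⁅y, z⁆ ⁅w, x⁆ - g ⁅x, z⁆ ⁅w, y⁆ + g ⁅x, y⁆ ⁅w, z⁆) := by
  have hT_lie : ∀ a b c d : L,
      T ⁅a, b⁆ c d = -g ⁅⁅a, b⁆, c⁆ d + g ⁅⁅a, b⁆, d⁆ c - g ⁅c, d⁆ ⁅a, b⁆ := by
    intro a b c d
    rw [hT, ← lie_skew d, map_neg, LinearMap.neg_apply]
    ring
  have jacobi := g.map_lie_lie_sub_map_lie_lie_add_map_lie_lie
  intro w x y z
  rw [hdT]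
  simp only [hT_lie]
  linear_combination jacobi w x y z - jacobi w x z y + jacobi w y z x - jacobi x y z w
    + hsymm ⁅w, x⁆ ⁅y, z⁆ + hsymm ⁅x, z⁆ ⁅w, y⁆ + hsymm ⁅w, z⁆ ⁅x, y⁆

/-- For an abelian complex structure with a J-invariant inner product,
the Chevalley–Eilenberg differential of the Bismut torsion 3-form equals
`2( g([y,z],[w,x]) - g([x,z],[w,y]) + g([x,y],[w,z]) )`. -/
theorem dT_bismut_formula
    {L : Type*} [LieRing L] [LieAlgebra ℝ L]
    (J : L →ₗ[ℝ] L)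
    (hJ2 : ∀ x : L, J (J x) = -x)
    (hab : ∀ x y : L, ⁅J x, J y⁆ = ⁅x, y⁆)
    (g : L →ₗ[ℝ] L →ₗ[ℝ] ℝ)
    (hsymm : ∀ x y : L, g x y = g y x)
    (hpos : ∀ x : L, x ≠ 0 → 0 < g x x)
    (hJinv : ∀ x y : L, g (J x) (J y) = g x y)
    (T : L → L → L → ℝ)
    (hT : ∀ x y z : L, T x y z = -g ⁅x, y⁆ z - g ⁅y, z⁆ x - g ⁅z, x⁆ y)
    (dT : L → L → L → L → ℝ)
    (hdT : ∀ w x y z : L, dT w x y z =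
      -T ⁅w, x⁆ y z + T ⁅w, y⁆ x z - T ⁅w, z⁆ x y
      - T ⁅x, y⁆ w z + T ⁅x, z⁆ w y - T ⁅y, z⁆ w x) :
    ∀ w x y z : L, dT w x y z =
      2 * (g ⁅y, z⁆ ⁅w, x⁆ - g ⁅x, z⁆ ⁅w, y⁆ + g ⁅x, y⁆ ⁅w, z⁆) :=
  dT_bismut_formula_general g hsymm T hT dT hdT
end

section
/- Let g be a real Lie algebra with an abelian complex structure J and a J-invariant inner product satisfying the pluriclosed identity g([y,z],[w,x]) - g([x,z],[w,y]) + g([x,y],[w,z]) = 0 for all x,y,z,w. Then for all x,y ∈ g: ‖[x,y]‖² + ‖[x,Jy]‖² = g([x,Jx],[y,Jy]). -/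
/-! The pluriclosed identity at `(x, Jy, Jx, y)`, simplified with `[Jy, Jx] = [y, x]` and with
`[y, Jx] = [x, Jy]` (which holds for every abelian complex structure), is exactly the claim. -/

theorem lie_apply_eq_lie_apply_of_abelian {L : Type*} [LieRing L] (J : L → L)
    (hJ2 : ∀ x : L, J (J x) = -x) (hab : ∀ x y : L, ⁅J x, J y⁆ = ⁅x, y⁆) (a b : L) :
    ⁅a, J b⁆ = ⁅b, J a⁆ := by
  have h := hab (J a) b
  rw [hJ2, neg_lie] at h
  rw [← lie_skew b (J a), ← h, neg_neg]

theorem LinearMap.apply_lie_swap {R L : Type*} [CommRing R] [LieRing L] [LieAlgebra R L]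
    (g : L →ₗ[R] L →ₗ[R] R) (x y : L) : g ⁅y, x⁆ ⁅y, x⁆ = g ⁅x, y⁆ ⁅x, y⁆ := by
  simp only [← lie_skew y x, map_neg, LinearMap.neg_apply, neg_neg]

theorem pluriclosed_norm_identity_general
    {L : Type*} [LieRing L] [LieAlgebra ℝ L]
    (J : L →ₗ[ℝ] L)
    (hJ2 : ∀ x : L, J (J x) = -x)
    (hab : ∀ x y : L, ⁅J x, J y⁆ = ⁅x, y⁆)
    (g : L →ₗ[ℝ] L →ₗ[ℝ] ℝ)
    (hpc : ∀ x y z w : L, g ⁅y, z⁆ ⁅w, x⁆ - g ⁅x, z⁆ ⁅w, y⁆ + g ⁅x, y⁆ ⁅w, z⁆ = 0) :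
    ∀ x y : L, g ⁅x, y⁆ ⁅x, y⁆ + g ⁅x, J y⁆ ⁅x, J y⁆ = g ⁅x, J x⁆ ⁅y, J y⁆ := by
  intro x y
  have h := hpc x (J y) (J x) y
  rw [hab, lie_apply_eq_lie_apply_of_abelian J hJ2 hab y x, g.apply_lie_swap] at h
  linarith

/-- With an abelian complex structure and a J-invariant pluriclosed
inner product, `‖[x,y]‖² + ‖[x,Jy]‖² = g([x,Jx],[y,Jy])`. -/
theorem pluriclosed_norm_identity
    {L : Type*} [LieRing L] [LieAlgebra ℝ L]
    (J : L →ₗ[ℝ] L)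
    (hJ2 : ∀ x : L, J (J x) = -x)
    (hab : ∀ x y : L, ⁅J x, J y⁆ = ⁅x, y⁆)
    (g : L →ₗ[ℝ] L →ₗ[ℝ] ℝ)
    (hsymm : ∀ x y : L, g x y = g y x)
    (hpos : ∀ x : L, x ≠ 0 → 0 < g x x)
    (hJinv : ∀ x y : L, g (J x) (J y) = g x y)
    (hpc : ∀ x y z w : L, g ⁅y, z⁆ ⁅w, x⁆ - g ⁅x, z⁆ ⁅w, y⁆ + g ⁅x, y⁆ ⁅w, z⁆ = 0) :
    ∀ x y : L, g ⁅x, y⁆ ⁅x, y⁆ + g ⁅x, J y⁆ ⁅x, J y⁆ = g ⁅x, J x⁆ ⁅y, J y⁆ :=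
  pluriclosed_norm_identity_general J hJ2 hab g hpc
end

section
/- Let g be a real Lie algebra with an abelian complex structure J and a J-invariant inner product satisfying the pluriclosed identity g([y,z],[w,x]) - g([x,z],[w,y]) + g([x,y],[w,z]) = 0 for all x,y,z,w. Then an element x ∈ g lies in the center of g if and only if [x,Jx] = 0. -/
/-!
Apply the pluriclosed identity to `(x, y, Jx, Jy)`. Once `[x, Jx] = 0`, the abelian condition
turns the two remaining terms into `-g([y, Jx], [y, Jx]) - g([x, y], [x, y])`, a sum of two
squared norms that vanishes, so `[x, y] = 0`.
-/

theorem lie_apply_left_eq_neg_lie_apply_right {R L : Type*} [CommRing R] [LieRing L]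
    [LieAlgebra R L] (J : L →ₗ[R] L) (hJ2 : ∀ x : L, J (J x) = -x)
    (hab : ∀ x y : L, ⁅J x, J y⁆ = ⁅x, y⁆) (a b : L) : ⁅J a, b⁆ = -⁅a, J b⁆ := by
  rw [← hab, hJ2, neg_lie]

theorem eq_zero_of_add_eq_zero_of_posDef {L : Type*} [AddCommGroup L] [Module ℝ L]
    {g : L →ₗ[ℝ] L →ₗ[ℝ] ℝ} (hpos : ∀ x : L, x ≠ 0 → 0 < g x x) {u v : L}
    (h : g u u + g v v = 0) : v = 0 := by
  have nonneg : ∀ w : L, 0 ≤ g w w := fun w => by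
    rcases eq_or_ne w 0 with rfl | hw
    · simp
    · exact (hpos w hw).le
  by_contra hv
  linarith [nonneg u, hpos v hv]

theorem pluriclosed_norm_sq_add_norm_sq_eq_zero {L : Type*} [LieRing L] [LieAlgebra ℝ L]
    (J : L →ₗ[ℝ] L) (hJ2 : ∀ x : L, J (J x) = -x) (hab : ∀ x y : L, ⁅J x, J y⁆ = ⁅x, y⁆)
    (g : L →ₗ[ℝ] L →ₗ[ℝ] ℝ)
    (hpc : ∀ x y z w : L, g ⁅y, z⁆ ⁅w, x⁆ - g ⁅x, z⁆ ⁅w, y⁆ + g ⁅x, y⁆ ⁅w, z⁆ = 0)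
    {x : L} (hx : ⁅x, J x⁆ = 0) (y : L) :
    g ⁅y, J x⁆ ⁅y, J x⁆ + g ⁅x, y⁆ ⁅x, y⁆ = 0 := by
  have key := hpc x y (J x) (J y)
  rw [hx, lie_apply_left_eq_neg_lie_apply_right J hJ2 hab, hab, ← lie_skew y x] at key
  simp only [map_neg, map_zero, LinearMap.zero_apply, sub_zero] at key
  linarith

theorem center_iff_bracket_Jx_general
    {L : Type*} [LieRing L] [LieAlgebra ℝ L]
    (J : L →ₗ[ℝ] L)
    (hJ2 : ∀ x : L, J (J x) = -x)
    (hab : ∀ x y : L, ⁅J x, J y⁆ = ⁅x, y⁆)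
    (g : L →ₗ[ℝ] L →ₗ[ℝ] ℝ)
    (hpos : ∀ x : L, x ≠ 0 → 0 < g x x)
    (hpc : ∀ x y z w : L, g ⁅y, z⁆ ⁅w, x⁆ - g ⁅x, z⁆ ⁅w, y⁆ + g ⁅x, y⁆ ⁅w, z⁆ = 0) :
    ∀ x : L, (∀ y : L, ⁅x, y⁆ = 0) ↔ ⁅x, J x⁆ = 0 :=
  fun _ => ⟨fun h => h _, fun hx y => eq_zero_of_add_eq_zero_of_posDef hpos
    (pluriclosed_norm_sq_add_norm_sq_eq_zero J hJ2 hab g hpc hx y)⟩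

/-- With an abelian complex structure and a J-invariant pluriclosed
inner product, `x` is central iff `[x,Jx] = 0`. -/
theorem center_iff_bracket_Jx
    {L : Type*} [LieRing L] [LieAlgebra ℝ L]
    (J : L →ₗ[ℝ] L)
    (hJ2 : ∀ x : L, J (J x) = -x)
    (hab : ∀ x y : L, ⁅J x, J y⁆ = ⁅x, y⁆)
    (g : L →ₗ[ℝ] L →ₗ[ℝ] ℝ)
    (hsymm : ∀ x y : L, g x y = g y x)
    (hpos : ∀ x : L, x ≠ 0 → 0 < g x x)
    (hJinv : ∀ x y : L, g (J x) (J y) = g x y)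
    (hpc : ∀ x y z w : L, g ⁅y, z⁆ ⁅w, x⁆ - g ⁅x, z⁆ ⁅w, y⁆ + g ⁅x, y⁆ ⁅w, z⁆ = 0) :
    ∀ x : L, (∀ y : L, ⁅x, y⁆ = 0) ↔ ⁅x, J x⁆ = 0 :=
  center_iff_bracket_Jx_general J hJ2 hab g hpos hpc
end

section
/- Let g be a real Lie algebra with an abelian complex structure J and a J-invariant pluriclosed inner product. Suppose the J-invariant ideal g¹_J = [g,g] + J[g,g] is 2-step nilpotent. Then g itself is 2-step nilpotent, i.e. [[g,g],g] = 0. -/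
/-! Write `A(x, y) = ⁅x, y⁆ + J⁅x, Jy⁆`. Because `J` is abelian, the Jacobi identity gives the exchange
laws `A(x, A(u, w)) = A(w, A(u, x))` and `A(A(u, w), z) = A(A(u, z), w)`, and pluriclosedness gives
`|A(a, b)|² + |A(b, a)|² = 2 g(A(a, a), A(b, b))` and `|⁅a, z⁆|² + |⁅Ja, z⁆|² = g(⁅z, Jz⁆, ⁅a, Ja⁆)`; by the
latter, `a` is central as soon as `⁅a, Ja⁆ = 0`.
For `s = A(p, A(z, z))` the exchange laws turn `A(s, s)` into a triple `A`-product of elements of `g¹_J`,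
which vanishes because `g¹_J` is 2-step nilpotent; positivity then forces `A(A(p, p), A(z, z)) = 0`.
As `A(z, z) = J⁅z, Jz⁆`, `A(Jx, Jy) = A(x, y)` and the `⁅z, Jz⁆` span `[g, g]`, `A` vanishes on `[g, g]`;
for `m ∈ [g, g]` this says `⁅m, Jm⁆ = 0`, so `m` is central. -/

structure AbelianComplexStructure (L : Type*) [LieRing L] [LieAlgebra ℝ L] where
  J : L →ₗ[ℝ] L
  J_J : ∀ x, J (J x) = -x
  lie_J_J : ∀ x y, ⁅J x, J y⁆ = ⁅x, y⁆

def IsPluriclosed {L : Type*} [LieRing L] [LieAlgebra ℝ L] (g : L →ₗ[ℝ] L →ₗ[ℝ] ℝ) : Prop :=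
  ∀ x y z w : L, g ⁅y, z⁆ ⁅w, x⁆ - g ⁅x, z⁆ ⁅w, y⁆ + g ⁅x, y⁆ ⁅w, z⁆ = 0

lemma eq_zero_of_apply_self_add_apply_self_eq_zero {M : Type*} [AddCommGroup M] [Module ℝ M]
    {g : M →ₗ[ℝ] M →ₗ[ℝ] ℝ} (hpos : ∀ x : M, x ≠ 0 → 0 < g x x) {x y : M}
    (h : g x x + g y y = 0) : x = 0 := by
  have nonneg : ∀ v : M, 0 ≤ g v v := fun v => by
    rcases eq_or_ne v 0 with rfl | hv
    · simp
    · exact (hpos v hv).le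
  by_contra hx
  linarith [hpos x hx, nonneg y]

namespace AbelianComplexStructure

variable {L : Type*} [LieRing L] [LieAlgebra ℝ L] (K : AbelianComplexStructure L)

lemma J_eq_zero_iff {x : L} : K.J x = 0 ↔ x = 0 := by
  refine ⟨fun h => ?_, fun h => by rw [h, map_zero]⟩
  simpa [h] using K.J_J x

lemma lie_J_left (x y : L) : ⁅K.J x, y⁆ = -⁅x, K.J y⁆ := by
  rw [← K.lie_J_J, K.J_J, neg_lie]

lemma lie_J_comm (x y : L) : ⁅x, K.J y⁆ = ⁅y, K.J x⁆ := by
  rw [← lie_skew, lie_J_left, neg_neg]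

/-- The real form of the `(1,0)`-part of `⁅x - iJx, y + iJy⁆`. -/
def mixedBracket : L →ₗ[ℝ] L →ₗ[ℝ] L :=
  LinearMap.mk₂ ℝ (fun x y => ⁅x, y⁆ + K.J ⁅x, K.J y⁆)
    (fun _ _ _ => by simp only [add_lie, map_add]; abel)
    (fun _ _ _ => by simp only [smul_lie, map_smul, smul_add])
    (fun _ _ _ => by simp only [lie_add, map_add]; abel)
    (fun _ _ _ => by simp only [lie_smul, map_smul, smul_add])

local notation "A" => K.mixedBracket

lemma mixedBracket_apply (x y : L) : A x y = ⁅x, y⁆ + K.J ⁅x, K.J y⁆ := rfl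

lemma mixedBracket_self (x : L) : A x x = K.J ⁅x, K.J x⁆ := by
  rw [mixedBracket_apply, lie_self, zero_add]

lemma mixedBracket_J_left (x y : L) : A (K.J x) y = K.J (A x y) := by
  rw [mixedBracket_apply, mixedBracket_apply, lie_J_J, lie_J_left, map_add, J_J]
  abel

lemma mixedBracket_J_right (x y : L) : A x (K.J y) = -K.J (A x y) := by
  simp only [mixedBracket_apply, map_add, J_J, lie_neg, map_neg]
  abel

lemma mixedBracket_J_J (x y : L) : A (K.J x) (K.J y) = A x y := by
  rw [mixedBracket_J_left, mixedBracket_J_right, map_neg, J_J, neg_neg]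

lemma mixedBracket_sub_swap (x y : L) : A x y - A y x = 2 • ⁅x, y⁆ := by
  rw [mixedBracket_apply, mixedBracket_apply, lie_J_comm K y x, ← lie_skew y x]
  abel

lemma lie_mixedBracket_left_comm (u w z : L) : ⁅A u w, z⁆ = ⁅A u z, w⁆ := by
  have jacobi : ∀ w z : L, ⁅⁅u, w⁆, z⁆ = ⁅u, ⁅w, z⁆⁆ + ⁅⁅u, z⁆, w⁆ := fun w z => by
    rw [leibniz_lie u w z, ← lie_skew ⁅u, z⁆ w]
    abel
  rw [mixedBracket_apply, mixedBracket_apply, add_lie, add_lie, lie_J_left, lie_J_left,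
    jacobi w z, jacobi (K.J w) (K.J z), lie_J_J]
  abel

lemma lie_mixedBracket_comm (x u w : L) : ⁅x, A u w⁆ = ⁅w, A u x⁆ := by
  rw [← lie_skew, lie_mixedBracket_left_comm, lie_skew]

lemma mixedBracket_mixedBracket_right_comm (x u w : L) : A x (A u w) = A w (A u x) := by
  rw [K.mixedBracket_apply x, K.mixedBracket_apply w, ← mixedBracket_J_left, ← mixedBracket_J_left,
    K.lie_mixedBracket_comm x u w, K.lie_mixedBracket_comm x (K.J u) w]

lemma mixedBracket_mixedBracket_left_comm (u w z : L) : A (A u w) z = A (A u z) w := by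
  have swap : ∀ x y : L, A x y = A y x + 2 • ⁅x, y⁆ := fun x y => by
    rw [← mixedBracket_sub_swap, add_sub_cancel]
  rw [swap, mixedBracket_mixedBracket_right_comm, lie_mixedBracket_left_comm, swap (A u z) w]

lemma two_smul_lie_eq (a b : L) :
    (2 : ℝ) • ⁅a, b⁆ = ⁅a, K.J a⁆ + ⁅K.J b, K.J (K.J b)⁆ - ⁅a + K.J b, K.J (a + K.J b)⁆ := by
  simp only [two_smul, map_add, add_lie, lie_add, J_J, lie_J_J, lie_neg, ← lie_skew b a]
  abel

lemma lie_mem_span_lie_J_self (a b : L) :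
    ⁅a, b⁆ ∈ Submodule.span ℝ (Set.range fun z => ⁅z, K.J z⁆) := by
  have mem : ∀ z, ⁅z, K.J z⁆ ∈ Submodule.span ℝ (Set.range fun z => ⁅z, K.J z⁆) :=
    fun z => Submodule.subset_span ⟨z, rfl⟩
  refine (Submodule.smul_mem_iff _ (two_ne_zero : (2 : ℝ) ≠ 0)).mp ?_
  rw [two_smul_lie_eq]
  exact sub_mem (add_mem (mem a) (mem _)) (mem _)

lemma mixedBracket_mem {S : Submodule ℝ L} (hbr : ∀ x y : L, ⁅x, y⁆ ∈ S)
    (hJS : ∀ s ∈ S, K.J s ∈ S) (x y : L) : A x y ∈ S :=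
  S.add_mem (hbr x y) (hJS _ (hbr x _))

lemma mixedBracket_mixedBracket_eq_zero_of_mem {S : Submodule ℝ L} (hJS : ∀ s ∈ S, K.J s ∈ S)
    (h2S : ∀ a ∈ S, ∀ b ∈ S, ∀ c ∈ S, ⁅⁅a, b⁆, c⁆ = (0 : L)) {a b c : L}
    (ha : a ∈ S) (hb : b ∈ S) (hc : c ∈ S) : A (A a b) c = 0 := by
  have hJb := hJS b hb
  have hJc := hJS c hc
  rw [K.mixedBracket_apply (A a b), K.mixedBracket_apply a b, add_lie, add_lie, lie_J_left, lie_J_J,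
    h2S a ha b hb c hc, h2S a ha _ hJb _ hJc, h2S a ha b hb _ hJc, h2S a ha _ hJb c hc]
  simp

section Metric

variable {g : L →ₗ[ℝ] L →ₗ[ℝ] ℝ}

lemma apply_lie_add_apply_J_lie (hg : IsPluriclosed g) (a z : L) :
    g ⁅a, z⁆ ⁅a, z⁆ + g ⁅K.J a, z⁆ ⁅K.J a, z⁆ = g ⁅z, K.J z⁆ ⁅a, K.J a⁆ := by
  have h := hg a z (K.J z) (K.J a)
  rw [← neg_neg ⁅a, K.J z⁆, ← lie_J_left, lie_J_J, K.lie_J_left a a] at h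
  simp only [map_neg, LinearMap.neg_apply] at h
  linarith

lemma apply_mixedBracket_add_apply_mixedBracket_swap (hg : IsPluriclosed g)
    (hgJ : ∀ x y : L, g (K.J x) (K.J y) = g x y) (a b : L) :
    g (A a b) (A a b) + g (A b a) (A b a) = 2 * g (A a a) (A b b) := by
  have h := K.apply_lie_add_apply_J_lie hg b a
  rw [← lie_skew b a, lie_J_left, lie_J_comm] at h
  rw [K.mixedBracket_apply a b, K.mixedBracket_apply b a, ← lie_skew b a, lie_J_comm K b a,
    mixedBracket_self, mixedBracket_self, hgJ]
  simp only [map_add, map_neg, LinearMap.add_apply, LinearMap.neg_apply, hgJ] at h ⊢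
  linarith

lemma lie_eq_zero_of_lie_J_self_eq_zero (hg : IsPluriclosed g)
    (hpos : ∀ x : L, x ≠ 0 → 0 < g x x) {a : L} (ha : ⁅a, K.J a⁆ = 0) (z : L) : ⁅a, z⁆ = 0 := by
  have h := K.apply_lie_add_apply_J_lie hg a z
  rw [ha, map_zero] at h
  exact eq_zero_of_apply_self_add_apply_self_eq_zero hpos h

variable {S : Submodule ℝ L}

lemma mixedBracket_lie_J_self_eq_zero (hg : IsPluriclosed g)
    (hgJ : ∀ x y : L, g (K.J x) (K.J y) = g x y) (hpos : ∀ x : L, x ≠ 0 → 0 < g x x)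
    (hbr : ∀ x y : L, ⁅x, y⁆ ∈ S) (hJS : ∀ s ∈ S, K.J s ∈ S)
    (h2S : ∀ a ∈ S, ∀ b ∈ S, ∀ c ∈ S, ⁅⁅a, b⁆, c⁆ = (0 : L)) (p z : L) :
    A ⁅p, K.J p⁆ ⁅z, K.J z⁆ = 0 := by
  rw [← mixedBracket_J_J, ← mixedBracket_self, ← mixedBracket_self]
  set q := A p p
  set r := A z z
  set s := A p r
  have hps : A p s = A r q := K.mixedBracket_mixedBracket_right_comm p p r
  have hsp : A s p = A q r := K.mixedBracket_mixedBracket_left_comm p r p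
  have hss : A s s = 0 := by
    rw [K.mixedBracket_mixedBracket_left_comm p r s, hps]
    exact K.mixedBracket_mixedBracket_eq_zero_of_mem hJS h2S (K.mixedBracket_mem hbr hJS z z)
      (K.mixedBracket_mem hbr hJS p p) (K.mixedBracket_mem hbr hJS z z)
  have h := K.apply_mixedBracket_add_apply_mixedBracket_swap hg hgJ p s
  rw [hss, map_zero, mul_zero, add_comm] at h
  rw [← hsp]
  exact eq_zero_of_apply_self_add_apply_self_eq_zero hpos h

lemma mixedBracket_lie_lie_eq_zero (hg : IsPluriclosed g)
    (hgJ : ∀ x y : L, g (K.J x) (K.J y) = g x y) (hpos : ∀ x : L, x ≠ 0 → 0 < g x x)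
    (hbr : ∀ x y : L, ⁅x, y⁆ ∈ S) (hJS : ∀ s ∈ S, K.J s ∈ S)
    (h2S : ∀ a ∈ S, ∀ b ∈ S, ∀ c ∈ S, ⁅⁅a, b⁆, c⁆ = (0 : L)) (a b c d : L) :
    A ⁅a, b⁆ ⁅c, d⁆ = 0 := by
  have hQ := K.mixedBracket_lie_J_self_eq_zero hg hgJ hpos hbr hJS h2S
  have h₁ : ∀ z, ∀ x ∈ Submodule.span ℝ (Set.range fun z => ⁅z, K.J z⁆), A x ⁅z, K.J z⁆ = 0 :=
    fun z => LinearMap.eqOn_span (f := K.mixedBracket.flip ⁅z, K.J z⁆) (g := 0)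
      (by rintro _ ⟨p, rfl⟩; exact hQ p z)
  exact LinearMap.eqOn_span (f := A ⁅a, b⁆) (g := 0)
    (by rintro _ ⟨z, rfl⟩; exact h₁ z _ (K.lie_mem_span_lie_J_self a b))
    (K.lie_mem_span_lie_J_self c d)

theorem lie_lie_eq_zero (hg : IsPluriclosed g)
    (hgJ : ∀ x y : L, g (K.J x) (K.J y) = g x y) (hpos : ∀ x : L, x ≠ 0 → 0 < g x x)
    (hbr : ∀ x y : L, ⁅x, y⁆ ∈ S) (hJS : ∀ s ∈ S, K.J s ∈ S)
    (h2S : ∀ a ∈ S, ∀ b ∈ S, ∀ c ∈ S, ⁅⁅a, b⁆, c⁆ = (0 : L)) (x y z : L) : ⁅⁅x, y⁆, z⁆ = 0 := by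
  have h := K.mixedBracket_lie_lie_eq_zero hg hgJ hpos hbr hJS h2S x y x y
  rw [mixedBracket_self, J_eq_zero_iff] at h
  exact K.lie_eq_zero_of_lie_J_self_eq_zero hg hpos h z

end Metric

end AbelianComplexStructure

theorem two_step_of_gJ_two_step_general
    {L : Type*} [LieRing L] [LieAlgebra ℝ L]
    (J : L →ₗ[ℝ] L)
    (hJ2 : ∀ x : L, J (J x) = -x)
    (hab : ∀ x y : L, ⁅J x, J y⁆ = ⁅x, y⁆)
    (g : L →ₗ[ℝ] L →ₗ[ℝ] ℝ)
    (hpos : ∀ x : L, x ≠ 0 → 0 < g x x)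
    (hJinv : ∀ x y : L, g (J x) (J y) = g x y)
    (hpc : ∀ x y z w : L, g ⁅y, z⁆ ⁅w, x⁆ - g ⁅x, z⁆ ⁅w, y⁆ + g ⁅x, y⁆ ⁅w, z⁆ = 0)
    (S : Submodule ℝ L)
    (hS : S = Submodule.span ℝ {z : L | ∃ x y : L, z = ⁅x, y⁆ ∨ z = J ⁅x, y⁆})
    (h2S : ∀ a ∈ S, ∀ b ∈ S, ∀ c ∈ S, ⁅⁅a, b⁆, c⁆ = (0 : L)) :
    ∀ x y z : L, ⁅⁅x, y⁆, z⁆ = 0 := by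
  let K : AbelianComplexStructure L := ⟨J, hJ2, hab⟩
  have hJS : S ≤ S.comap J := by
    rw [hS, Submodule.span_le]
    rintro _ ⟨x, y, rfl | rfl⟩
    · exact Submodule.subset_span ⟨x, y, Or.inr rfl⟩
    · rw [SetLike.mem_coe, Submodule.mem_comap, hJ2]
      exact neg_mem (Submodule.subset_span ⟨x, y, Or.inl rfl⟩)
  have hbr : ∀ x y : L, ⁅x, y⁆ ∈ S := fun x y => hS ▸ Submodule.subset_span ⟨x, y, Or.inl rfl⟩
  exact K.lie_lie_eq_zero hpc hJinv hpos hbr hJS h2S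

/-- If the ideal `g¹_J = [g,g] + J[g,g]` is 2-step nilpotent, then a
Lie algebra with an abelian complex structure and a J-invariant pluriclosed inner
product is itself 2-step nilpotent. -/
theorem two_step_of_gJ_two_step
    {L : Type*} [LieRing L] [LieAlgebra ℝ L] [FiniteDimensional ℝ L]
    (J : L →ₗ[ℝ] L)
    (hJ2 : ∀ x : L, J (J x) = -x)
    (hint : ∀ x y : L, J ⁅x, y⁆ - ⁅J x, y⁆ - ⁅x, J y⁆ - J ⁅J x, J y⁆ = 0)
    (hab : ∀ x y : L, ⁅J x, J y⁆ = ⁅x, y⁆)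
    (g : L →ₗ[ℝ] L →ₗ[ℝ] ℝ)
    (hsymm : ∀ x y : L, g x y = g y x)
    (hpos : ∀ x : L, x ≠ 0 → 0 < g x x)
    (hJinv : ∀ x y : L, g (J x) (J y) = g x y)
    (hpc : ∀ x y z w : L, g ⁅y, z⁆ ⁅w, x⁆ - g ⁅x, z⁆ ⁅w, y⁆ + g ⁅x, y⁆ ⁅w, z⁆ = 0)
    (S : Submodule ℝ L)
    (hS : S = Submodule.span ℝ {z : L | ∃ x y : L, z = ⁅x, y⁆ ∨ z = J ⁅x, y⁆})
    (h2S : ∀ a ∈ S, ∀ b ∈ S, ∀ c ∈ S, ⁅⁅a, b⁆, c⁆ = (0 : L)) :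
    ∀ x y z : L, ⁅⁅x, y⁆, z⁆ = 0 :=
  two_step_of_gJ_two_step_general J hJ2 hab g hpos hJinv hpc S hS h2S
end

section
/- Let g be a 2-step nilpotent real Lie algebra with a left-invariant Strominger Kähler-like structure given by an orthonormal basis {ε_i}_{i=1}^{2n} with Jε_i = ε_{n+i} and only nonzero brackets [ε_i, ε_{n+i}] = λ_i x_i (i = 1,…,s, λ_i > 0, {x_i} orthonormal in [g,g]). For any diagonal J-invariant metric h = Σ a_k ((ε^k)² + (ε^{n+k})²) with a_k > 0, the Bismut Ricci form ρ^B_h(x,y) = (1/2) Σ_{k=1}^s (1/a_k) h([ε_k, ε_{n+k}], [x,y]) is diagonal in the basis {ε^k ∧ ε^{n+k}}, i.e. ρ^B_h = Σ_{k=1}^s b_k ε^k ∧ ε^{n+k} for some reals b_k. -/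
/-! Bilinearity reduces the bracket to its values on the basis, and of these only
`⁅ε_k, ε_{n+k}⁆` with `k < s` survive; hence `⁅u, v⁆ = ∑ₖ (ε^k ∧ ε^{n+k})(u, v) • ⁅ε_k, ε_{n+k}⁆`.
Since `ρ^B_h(u, v)` is linear in `⁅u, v⁆`, it is a combination of the same 2-forms. -/

open Finset

namespace Module.Basis

variable {ι R M : Type*} [CommRing R] [AddCommGroup M] [Module R M]

/-- `(ε^i ∧ ε^j)(u, v)` for the dual basis `ε` of `b`. -/
noncomputable def coordWedge (b : Basis ι R M) (i j : ι) (u v : M) : R :=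
  b.coord i u * b.coord j v - b.coord i v * b.coord j u

end Module.Basis

theorem Fin.sum_univ_eq_sum_castLE {M : Type*} [AddCommMonoid M] {s n : ℕ} (hs : s ≤ n)
    (f : Fin n → M) (hf : ∀ i : Fin n, s ≤ (i : ℕ) → f i = 0) :
    ∑ i, f i = ∑ k : Fin s, f (Fin.castLE hs k) := by
  refine (Fintype.sum_of_injective _ (Fin.castLE_injective hs) _ _
    (fun i hi => hf i ?_) fun _ => rfl).symm
  by_contra! hi_lt
  exact hi ⟨⟨i, hi_lt⟩, rfl⟩

theorem Module.Basis.lie_eq_sum_coordWedge_smul {ι R L : Type*} [Fintype ι] [CommRing R]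
    [LieRing L] [LieAlgebra R L] (b : Basis (ι ⊕ ι) R L)
    (hll : ∀ i j, ⁅b (.inl i), b (.inl j)⁆ = 0) (hrr : ∀ i j, ⁅b (.inr i), b (.inr j)⁆ = 0)
    (hlr : ∀ i j, i ≠ j → ⁅b (.inl i), b (.inr j)⁆ = 0) (u v : L) :
    ⁅u, v⁆ = ∑ i, b.coordWedge (.inl i) (.inr i) u v • ⁅b (.inl i), b (.inr i)⁆ := by
  have hrl : ∀ i j, ⁅b (.inr i), b (.inl j)⁆ = -⁅b (.inl j), b (.inr i)⁆ :=
    fun _ _ => (lie_skew _ _).symm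
  conv_lhs => rw [← b.sum_repr u, ← b.sum_repr v]
  simp only [sum_lie, lie_sum, smul_lie, lie_smul]
  simp only [Fintype.sum_sum_type, hll, hrr, hrl, smul_zero, zero_add, add_zero,
    ← sum_add_distrib]
  refine sum_congr rfl fun i _ => ?_
  rw [Fintype.sum_eq_single i fun j hj => by simp [hlr _ _ hj.symm],
    Fintype.sum_eq_single i fun j hj => by simp [hlr _ _ hj]]
  simp only [coordWedge, coord_apply]
  module

theorem bismut_ricci_diagonal_general
    {L : Type*} [LieRing L] [LieAlgebra ℝ L]
    {n s : ℕ} (hs : s ≤ n)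
    (b : Module.Basis (Fin n ⊕ Fin n) ℝ L)
    (hbr_ll : ∀ i j : Fin n, ⁅b (Sum.inl i), b (Sum.inl j)⁆ = (0 : L))
    (hbr_rr : ∀ i j : Fin n, ⁅b (Sum.inr i), b (Sum.inr j)⁆ = (0 : L))
    (hbr_lr : ∀ i j : Fin n, i ≠ j ∨ s ≤ (i : ℕ) →
      ⁅b (Sum.inl i), b (Sum.inr j)⁆ = (0 : L))
    (a : Fin n → ℝ)
    (h : L →ₗ[ℝ] L →ₗ[ℝ] ℝ)
    (ρ : L → L → ℝ)
    (hρ : ∀ u v : L, ρ u v = (1 / 2) * ∑ k : Fin s, (1 / a (Fin.castLE hs k)) *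
      h ⁅b (Sum.inl (Fin.castLE hs k)), b (Sum.inr (Fin.castLE hs k))⁆ ⁅u, v⁆) :
    ∃ c : Fin s → ℝ, ∀ u v : L, ρ u v = ∑ k : Fin s,
      c k * (b.coord (Sum.inl (Fin.castLE hs k)) u * b.coord (Sum.inr (Fin.castLE hs k)) v
        - b.coord (Sum.inl (Fin.castLE hs k)) v * b.coord (Sum.inr (Fin.castLE hs k)) u) := by
  let w : Fin s → L := fun k => ⁅b (.inl (Fin.castLE hs k)), b (.inr (Fin.castLE hs k))⁆
  have hlie : ∀ u v : L, ⁅u, v⁆ =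
      ∑ k, b.coordWedge (.inl (Fin.castLE hs k)) (.inr (Fin.castLE hs k)) u v • w k := by
    intro u v
    rw [b.lie_eq_sum_coordWedge_smul hbr_ll hbr_rr fun i j hij => hbr_lr i j (.inl hij)]
    exact Fin.sum_univ_eq_sum_castLE hs _ fun i hi => by rw [hbr_lr i i (.inr hi), smul_zero]
  refine ⟨fun j => ∑ k, 1 / 2 * (1 / a (Fin.castLE hs k)) * h (w k) (w j), fun u v => ?_⟩
  rw [hρ, hlie]
  simp only [map_sum, map_smul, smul_eq_mul, mul_sum, sum_mul]
  rw [sum_comm]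
  refine sum_congr rfl fun j _ => sum_congr rfl fun k _ => ?_
  simp only [Module.Basis.coordWedge, w]
  ring

/-- For a diagonal metric `h` on a 2-step nilpotent Lie algebra with
the Strominger Kähler-like basis structure, the Bismut Ricci form
`ρ^B_h(u,v) = (1/2) Σ_k (1/a_k) h([ε_k,ε_{n+k}],[u,v])` is diagonal, i.e. a
combination of the forms `ε^k ∧ ε^{n+k}`. -/
theorem bismut_ricci_diagonal
    {L : Type*} [LieRing L] [LieAlgebra ℝ L]
    {n s : ℕ} (hs : s ≤ n)
    (b : Module.Basis (Fin n ⊕ Fin n) ℝ L)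
    (J : L →ₗ[ℝ] L)
    (hJl : ∀ i : Fin n, J (b (Sum.inl i)) = b (Sum.inr i))
    (hJr : ∀ i : Fin n, J (b (Sum.inr i)) = -b (Sum.inl i))
    (lam : Fin s → ℝ) (hlam : ∀ k, 0 < lam k)
    (x : Fin s → L)
    (hcentral : ∀ (k : Fin s) (z : L), ⁅x k, z⁆ = 0)
    (hbr : ∀ k : Fin s,
      ⁅b (Sum.inl (Fin.castLE hs k)), b (Sum.inr (Fin.castLE hs k))⁆ = lam k • x k)
    (hbr_ll : ∀ i j : Fin n, ⁅b (Sum.inl i), b (Sum.inl j)⁆ = (0 : L))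
    (hbr_rr : ∀ i j : Fin n, ⁅b (Sum.inr i), b (Sum.inr j)⁆ = (0 : L))
    (hbr_lr : ∀ i j : Fin n, i ≠ j ∨ s ≤ (i : ℕ) →
      ⁅b (Sum.inl i), b (Sum.inr j)⁆ = (0 : L))
    (a : Fin n → ℝ) (ha : ∀ k, 0 < a k)
    (h : L →ₗ[ℝ] L →ₗ[ℝ] ℝ)
    (hsymm : ∀ u v : L, h u v = h v u)
    (hdiag : ∀ i j : Fin n ⊕ Fin n,
      h (b i) (b j) = if i = j then Sum.elim a a i else 0)
    (ρ : L → L → ℝ)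
    (hρ : ∀ u v : L, ρ u v = (1 / 2) * ∑ k : Fin s, (1 / a (Fin.castLE hs k)) *
      h ⁅b (Sum.inl (Fin.castLE hs k)), b (Sum.inr (Fin.castLE hs k))⁆ ⁅u, v⁆) :
    ∃ c : Fin s → ℝ, ∀ u v : L, ρ u v = ∑ k : Fin s,
      c k * (b.coord (Sum.inl (Fin.castLE hs k)) u * b.coord (Sum.inr (Fin.castLE hs k)) v
        - b.coord (Sum.inl (Fin.castLE hs k)) v * b.coord (Sum.inr (Fin.castLE hs k)) u) :=
  bismut_ricci_diagonal_general hs b hbr_ll hbr_rr hbr_lr a h ρ hρ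
end

section
/- Let g be a real Lie algebra with an abelian complex structure J and a J-invariant pluriclosed inner product. Then for any y ∈ g with [y,Jy] = 0 one has [x,y] = 0 and [x,Jy] = 0 for all x ∈ g, i.e. y is central. -/
/-- The pluriclosed identity with `y = x` is trivial, and any `y`
with `[y,Jy] = 0` is central. -/
theorem pluriclosed_diag_and_center
    {L : Type*} [LieRing L] [LieAlgebra ℝ L]
    (J : L →ₗ[ℝ] L)
    (hJ2 : ∀ x : L, J (J x) = -x)
    (hab : ∀ x y : L, ⁅J x, J y⁆ = ⁅x, y⁆)
    (g : L →ₗ[ℝ] L →ₗ[ℝ] ℝ)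
    (hsymm : ∀ x y : L, g x y = g y x)
    (hpos : ∀ x : L, x ≠ 0 → 0 < g x x)
    (hJinv : ∀ x y : L, g (J x) (J y) = g x y)
    (hpc : ∀ x y z w : L, g ⁅y, z⁆ ⁅w, x⁆ - g ⁅x, z⁆ ⁅w, y⁆ + g ⁅x, y⁆ ⁅w, z⁆ = 0) :
    (∀ x : L, g ⁅x, x⁆ ⁅x, x⁆ + g ⁅x, J x⁆ ⁅x, J x⁆ = g ⁅x, J x⁆ ⁅x, J x⁆) ∧
      (∀ y : L, ⁅y, J y⁆ = 0 → ∀ x : L, ⁅x, y⁆ = 0 ∧ ⁅x, J y⁆ = 0) := by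
  have hnonneg : ∀ a : L, 0 ≤ g a a := by
    intro a
    by_cases h : a = 0
    · simp [h]
    · exact (hpos a h).le
  have hzero : ∀ a : L, g a a = 0 → a = 0 := by
    intro a h
    by_contra hne
    exact (hpos a hne).ne' h
  -- [y, Jx] = [x, Jy]
  have hswap : ∀ x y : L, ⁅y, J x⁆ = ⁅x, J y⁆ := by
    intro x y
    have h := hab (J y) x
    rw [hJ2, neg_lie] at h
    rw [← lie_skew x (J y), ← h, neg_neg]
  -- key identity: ‖[x,y]‖² + ‖[x,Jy]‖² = g([x,Jx],[y,Jy])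
  have key : ∀ x y : L,
      g ⁅x, y⁆ ⁅x, y⁆ + g ⁅x, J y⁆ ⁅x, J y⁆ = g ⁅x, J x⁆ ⁅y, J y⁆ := by
    intro x y
    have h := hpc x (J y) (J x) y
    rw [hab y x, hswap x y] at h
    have hxy : (⁅y, x⁆ : L) = -⁅x, y⁆ := by rw [← lie_skew x y, neg_neg]
    rw [hxy] at h
    simp only [map_neg, LinearMap.neg_apply, neg_neg] at h
    linarith
  refine ⟨fun x => by simp, fun y hy x => ?_⟩
  have h := key x y
  rw [hy] at h
  simp only [map_zero] at h
  have h1 : g ⁅x, y⁆ ⁅x, y⁆ = 0 :=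
    le_antisymm (by linarith [hnonneg ⁅x, J y⁆]) (hnonneg _)
  have h2 : g ⁅x, J y⁆ ⁅x, J y⁆ = 0 :=
    le_antisymm (by linarith [hnonneg ⁅x, y⁆]) (hnonneg _)
  exact ⟨hzero _ h1, hzero _ h2⟩
end
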